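/- Let d,m ∈ ℕ, T ∈ [0,∞), let μ ∈ C¹(ℝ^d,ℝ^d), σ ∈ ℝ^{d×m}, φ ∈ C(ℝ^m,[0,∞)), V ∈ C¹(ℝ^d,[0,∞)), let ‖·‖ be a norm on ℝ^d, assume for all x ∈ ℝ^d and z ∈ ℝ^m that V'(x)μ(x+σz) ≤ φ(z)V(x) and ‖x‖ ≤ V(x), let (Ω,ℱ,ℙ) be a probability space, let W: [0,T]×Ω → ℝ^m be a stochastic process with continuous sample paths, let X^x: [0,T]×Ω → ℝ^d, x ∈ ℝ^d, be stochastic processes with continuous sample paths, assume for all c ∈ [0,∞) that E[sup_{t∈[0,T]∩ℚ} exp(c·φ(W(t)))] + E[sup_{t∈[0,T]∩ℚ} ‖σW(t)‖^c] < ∞, and assume for all x ∈ ℝ^d, t ∈ [0,T], ω ∈ Ω that X^x(t,ω) = x + ∫₀^t μ(X^x(s,ω)) ds + σW(t,ω). Then (i) for all R,r ∈ [0,∞) the map Ω ∋ ω ↦ sup_{x: ‖x‖≤R} sup_{t∈[0,T]} ‖X^x(t,ω)‖^r ∈ [0,∞] is ℱ/ℬ([0,∞])-measurable, and (ii) for all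 R,r ∈ [0,∞) it holds that E[sup_{x: ‖x‖≤R} sup_{t∈[0,T]} ‖X^x(t)‖^r] < ∞. -/

import Mathlib

/-!
Fix a sample path. Subtracting the noise, `Y = X^x - σW` is `C¹` with `Y' = μ(Y + σW)`, so the
Lyapunov condition and Grönwall's inequality give `V(Y_t) ≤ V(x) e^{Kt}` with `K = max φ(W)` on
`[0,T]`. Since `‖·‖ ≤ V`, this yields `‖X^x_t‖ ≤ V(x) e^{KT} + max ‖σW‖`, and the `r`-th power of
the right-hand side is at most `2^r (C^r e^{rTK} + max ‖σW‖^r)` with `C = max V` on the ball,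
whose expectation is finite by assumption.

For measurability, trajectories started in a ball stay (by the same bound) in a compact set on which
`μ` is Lipschitz, so Grönwall makes `X^x_t` continuous in `x`. The supremum over the ball and
`[0,T]` is therefore a supremum over the countably many rational points, of measurable functions.
-/

open MeasureTheory ProbabilityTheory Filter
open scoped ENNReal NNReal

noncomputable section

/-- `N` is a norm on the real vector space `E`. -/
def IsNorm {E : Type*} [AddCommGroup E] [Module ℝ E] (N : E → ℝ) : Prop :=
  (∀ x, N x = 0 ↔ x = 0) ∧ (∀ (a : ℝ) (x : E), N (a • x) = |a| * N x) ∧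
    ∀ x y, N (x + y) ≤ N x + N y

/-- the rational points of the interval `[0,T]`. -/
def ratIcc (T : ℝ) : Set ℝ := Set.Icc 0 T ∩ Set.range ((↑) : ℚ → ℝ)

/-- the points of `ℚ^d` whose `N`-norm is at most `R`. -/
def ratBall (d : ℕ) (N : (Fin d → ℝ) → ℝ) (R : ℝ) : Set (Fin d → ℝ) :=
  {x | (∀ i, ∃ q : ℚ, (q : ℝ) = x i) ∧ N x ≤ R}

open Set Topology

namespace IsNorm

section Module

variable {E : Type*} [AddCommGroup E] [Module ℝ E] {N : E → ℝ}

theorem map_zero (hN : IsNorm N) : N 0 = 0 := (hN.1 0).2 rfl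

theorem nonneg (hN : IsNorm N) (x : E) : 0 ≤ N x := by
  have h := hN.2.2 x (-x)
  rw [add_neg_cancel, hN.map_zero, ← neg_one_smul ℝ x, hN.2.1, abs_neg, abs_one, one_mul] at h
  linarith

theorem convexOn (hN : IsNorm N) : ConvexOn ℝ univ N :=
  ⟨convex_univ, fun x _ y _ a b ha hb _ => by
    simpa only [hN.2.1, abs_of_nonneg ha, abs_of_nonneg hb, smul_eq_mul] using
      hN.2.2 (a • x) (b • y)⟩

end Module

variable {E : Type*} [NormedAddCommGroup E] [NormedSpace ℝ E] [FiniteDimensional ℝ E]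
  {N : E → ℝ}

theorem continuous (hN : IsNorm N) : Continuous N :=
  hN.convexOn.locallyLipschitz.continuous

theorem exists_pos_mul_norm_le (hN : IsNorm N) : ∃ c > 0, ∀ x, c * ‖x‖ ≤ N x := by
  rcases subsingleton_or_nontrivial E with hE | hE
  · exact ⟨1, one_pos, fun x => by simp [Subsingleton.elim x 0, hN.map_zero]⟩
  obtain ⟨z, hz, hmin⟩ := (isCompact_sphere (0 : E) 1).exists_isMinOn
    (NormedSpace.sphere_nonempty.2 zero_le_one) hN.continuous.continuousOn
  have hz0 : z ≠ 0 := ne_zero_of_mem_unit_sphere ⟨z, hz⟩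
  refine ⟨N z, (hN.nonneg z).lt_of_ne fun h => hz0 ((hN.1 z).1 h.symm), fun x => ?_⟩
  rcases eq_or_ne x 0 with rfl | hx
  · simp [hN.map_zero]
  have hxn : 0 < ‖x‖ := norm_pos_iff.2 hx
  have hu : ‖x‖⁻¹ • x ∈ Metric.sphere (0 : E) 1 := by
    simp [norm_smul, hxn.ne']
  calc N z * ‖x‖ ≤ N (‖x‖⁻¹ • x) * ‖x‖ := mul_le_mul_of_nonneg_right (hmin hu) hxn.le
    _ = N x := by rw [hN.2.1, abs_of_pos (inv_pos.2 hxn)]; field_simp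

theorem isCompact_setOf_le (hN : IsNorm N) (R : ℝ) : IsCompact {x | N x ≤ R} := by
  obtain ⟨c, hc, hcN⟩ := hN.exists_pos_mul_norm_le
  refine Metric.isCompact_of_isClosed_isBounded (isClosed_le hN.continuous continuous_const) ?_
  refine isBounded_iff_forall_norm_le.2 ⟨R / c, fun x (hx : N x ≤ R) => ?_⟩
  rw [le_div_iff₀' hc]
  exact (hcN x).trans hx

end IsNorm

theorem LowerSemicontinuousOn.biSup_eq_of_subset_closure {α δ : Type*} [TopologicalSpace α]
    [CompleteLinearOrder δ] {g : α → δ} {s t : Set α} (hg : LowerSemicontinuousOn g s)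
    (hts : t ⊆ s) (hst : s ⊆ closure t) : ⨆ x ∈ t, g x = ⨆ x ∈ s, g x := by
  refine le_antisymm (biSup_mono hts) (iSup₂_le fun x hx => le_of_forall_lt fun y hy => ?_)
  have := mem_closure_iff_nhdsWithin_neBot.1 (hst hx)
  have hev : ∀ᶠ z in 𝓝[t] x, y < g z := nhdsWithin_mono x hts (hg x hx y hy)
  obtain ⟨z, hyz, hz⟩ := (hev.and self_mem_nhdsWithin).exists
  exact hyz.trans_le (le_iSup₂ (f := fun z _ => g z) z hz)

theorem ratIcc_countable (T : ℝ) : (ratIcc T).Countable :=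
  (countable_range _).mono inter_subset_right

theorem Icc_subset_closure_ratIcc (T : ℝ) : Icc 0 T ⊆ closure (ratIcc T) := by
  intro t ht
  rcases (ht.1.trans ht.2).eq_or_lt with rfl | hT
  · obtain rfl : t = 0 := le_antisymm ht.2 ht.1
    exact subset_closure ⟨ht, 0, Rat.cast_zero⟩
  rw [← closure_Ioo hT.ne] at ht
  exact closure_minimal ((Rat.denseRange_cast.open_subset_closure_inter isOpen_Ioo).trans
    (closure_mono (inter_subset_inter_left _ Ioo_subset_Icc_self))) isClosed_closure ht

theorem biSup_ratIcc_eq {T : ℝ} {g : ℝ → ℝ≥0∞} (hg : ContinuousOn g (Icc 0 T)) :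
    ⨆ t ∈ ratIcc T, g t = ⨆ t ∈ Icc 0 T, g t :=
  hg.lowerSemicontinuousOn.biSup_eq_of_subset_closure inter_subset_left
    (Icc_subset_closure_ratIcc T)

theorem Measurable.biSup_ratIcc {Ω : Type*} [MeasurableSpace Ω] {T : ℝ} {g : ℝ → Ω → ℝ≥0∞}
    (hg : ∀ t ∈ Icc 0 T, Measurable (g t)) : Measurable fun ω => ⨆ t ∈ ratIcc T, g t ω :=
  .biSup _ (ratIcc_countable T) fun t ht => hg t ht.1

section IntegralEquation

variable {E : Type*} [NormedAddCommGroup E] [NormedSpace ℝ E]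
  {f : E → E} {n : ℝ → E} {T : ℝ} {x : E} {ξ : ℝ → E}

def IsIntegralSolution (f : E → E) (n : ℝ → E) (T : ℝ) (x : E) (ξ : ℝ → E) : Prop :=
  ContinuousOn ξ (Icc 0 T) ∧ ∀ t ∈ Icc 0 T, ξ t = x + (∫ s in (0 : ℝ)..t, f (ξ s)) + n t

namespace IsIntegralSolution

theorem sub_noise_zero (h : IsIntegralSolution f n T x ξ) (hT : 0 ≤ T) : ξ 0 - n 0 = x := by
  rw [h.2 0 ⟨le_rfl, hT⟩]
  simp

theorem hasDerivWithinAt_sub_noise [CompleteSpace E] (hf : Continuous f)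
    (h : IsIntegralSolution f n T x ξ) {t : ℝ} (ht : t ∈ Icc 0 T) :
    HasDerivWithinAt (fun s => ξ s - n s) (f (ξ t)) (Icc 0 T) t := by
  have hT : 0 ≤ T := ht.1.trans ht.2
  -- `ξ` is only continuous on `[0,T]`; extending it by constants makes the integrand continuous
  -- on `ℝ`, so the fundamental theorem of calculus applies at the endpoints too.
  set ξ' : ℝ → E := IccExtend hT ((Icc 0 T).domRestrict ξ)
  have hξ' : Continuous ξ' := h.1.domRestrict.Icc_extend'
  have hξξ' : ∀ s ∈ Icc 0 T, ξ' s = ξ s := fun s hs => IccExtend_of_mem _ _ hs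
  have hY : HasDerivAt (fun u => x + ∫ s in (0 : ℝ)..u, f (ξ' s)) (f (ξ' t)) t :=
    ((hf.comp hξ').integral_hasStrictDerivAt 0 t).hasDerivAt.const_add x
  have hsub : ∀ u ∈ Icc 0 T, ξ u - n u = x + ∫ s in (0 : ℝ)..u, f (ξ' s) := by
    intro u hu
    rw [h.2 u hu, add_sub_cancel_right]
    congr 1
    refine intervalIntegral.integral_congr fun s hs => ?_
    rw [uIcc_of_le hu.1] at hs
    rw [hξξ' s ⟨hs.1, hs.2.trans hu.2⟩]
  rw [← hξξ' t ht]
  exact hY.hasDerivWithinAt.congr hsub (hsub t ht)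

theorem hasDerivWithinAt_Ici_sub_noise [CompleteSpace E] (hf : Continuous f)
    (h : IsIntegralSolution f n T x ξ) {t : ℝ} (ht : t ∈ Ico 0 T) :
    HasDerivWithinAt (fun s => ξ s - n s) (f (ξ t)) (Ici t) t :=
  (h.hasDerivWithinAt_sub_noise hf (Ico_subset_Icc_self ht)).mono_of_mem_nhdsWithin
    (Icc_mem_nhdsGE_of_mem ht)

theorem continuousOn_sub_noise [CompleteSpace E] (hf : Continuous f)
    (h : IsIntegralSolution f n T x ξ) : ContinuousOn (fun s => ξ s - n s) (Icc 0 T) :=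
  fun _ ht => (h.hasDerivWithinAt_sub_noise hf ht).continuousWithinAt

theorem lyapunov_le [CompleteSpace E] {V : E → ℝ} {k : ℝ} (hf : Continuous f)
    (hV : Differentiable ℝ V) (h : IsIntegralSolution f n T x ξ)
    (hLyap : ∀ t ∈ Icc 0 T, ∀ y, fderiv ℝ V y (f (y + n t)) ≤ k * V y) {t : ℝ}
    (ht : t ∈ Icc 0 T) : V (ξ t - n t) ≤ V x * Real.exp (k * t) := by
  have hVd : ∀ s ∈ Icc 0 T, HasDerivWithinAt (fun s => V (ξ s - n s))
      (fderiv ℝ V (ξ s - n s) (f (ξ s))) (Icc 0 T) s := fun s hs =>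
    (hV _).hasFDerivAt.comp_hasDerivWithinAt s (h.hasDerivWithinAt_sub_noise hf hs)
  have hgron := le_gronwallBound_of_liminf_deriv_right_le (ε := 0)
    (fun s hs => (hVd s hs).continuousWithinAt)
    (fun s hs r hr => ((hVd s (Ico_subset_Icc_self hs)).mono_of_mem_nhdsWithin
      (Icc_mem_nhdsGE_of_mem hs)).liminf_right_slope_le hr)
    (congrArg V (h.sub_noise_zero (ht.1.trans ht.2))).le
    (fun s hs => by simpa using hLyap s (Ico_subset_Icc_self hs) (ξ s - n s)) t ht
  rwa [gronwallBound_ε0, sub_zero] at hgron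

theorem norm_sub_le [CompleteSpace E] {x' : E} {ξ' : ℝ → E} {S : Set E} {L : ℝ≥0}
    (hf : Continuous f) (h : IsIntegralSolution f n T x ξ) (h' : IsIntegralSolution f n T x' ξ')
    (hL : LipschitzOnWith L f S) (hξS : MapsTo ξ (Icc 0 T) S) (hξ'S : MapsTo ξ' (Icc 0 T) S)
    {t : ℝ} (ht : t ∈ Icc 0 T) : ‖ξ t - ξ' t‖ ≤ ‖x - x'‖ * Real.exp (L * t) := by
  have hT : 0 ≤ T := ht.1.trans ht.2
  have hsub : (fun s => ξ s - ξ' s) = fun s => (ξ s - n s) - (ξ' s - n s) := by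
    simp only [sub_sub_sub_cancel_right]
  have hgron := norm_le_gronwallBound_of_norm_deriv_right_le (ε := 0) (δ := ‖x - x'‖)
    (f := fun s => ξ s - ξ' s) (f' := fun s => f (ξ s) - f (ξ' s))
    (by rw [hsub]; exact (h.continuousOn_sub_noise hf).sub (h'.continuousOn_sub_noise hf))
    (fun s hs => by
      rw [hsub]; exact (h.hasDerivWithinAt_Ici_sub_noise hf hs).sub
        (h'.hasDerivWithinAt_Ici_sub_noise hf hs))
    (by rw [← h.sub_noise_zero hT, ← h'.sub_noise_zero hT, sub_sub_sub_cancel_right])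
    (fun s hs => by
      rw [add_zero]
      exact hL.norm_sub_le (hξS (Ico_subset_Icc_self hs)) (hξ'S (Ico_subset_Icc_self hs)))
    t ht
  rwa [gronwallBound_ε0, sub_zero] at hgron

end IsIntegralSolution

end IntegralEquation

theorem ENNReal.ofReal_add_rpow_le {a b r : ℝ} (ha : 0 ≤ a) (hb : 0 ≤ b) (hr : 0 ≤ r) :
    ENNReal.ofReal ((a + b) ^ r) ≤ 2 ^ r * (ENNReal.ofReal (a ^ r) + ENNReal.ofReal (b ^ r)) := by
  rw [← ENNReal.ofReal_rpow_of_nonneg (add_nonneg ha hb) hr, ENNReal.ofReal_add ha hb,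
    ← ENNReal.ofReal_rpow_of_nonneg ha hr, ← ENNReal.ofReal_rpow_of_nonneg hb hr]
  exact ENNReal.add_rpow_le_two_rpow_mul_rpow_add_rpow _ _ hr

section Lyapunov

variable {E : Type*} [NormedAddCommGroup E] [NormedSpace ℝ E]
  {f : E → E} {n : ℝ → E} {T : ℝ} {V N : E → ℝ} {ψ : ℝ → ℝ}

theorem lyapunov_le_of_isMaxOn (hN : IsNorm N) (hNV : ∀ y, N y ≤ V y)
    (hLyap : ∀ t ∈ Icc 0 T, ∀ y, fderiv ℝ V y (f (y + n t)) ≤ ψ t * V y) {s : ℝ}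
    (hs : IsMaxOn ψ (Icc 0 T) s) : ∀ t ∈ Icc 0 T, ∀ y, fderiv ℝ V y (f (y + n t)) ≤ ψ s * V y :=
  fun t ht y => (hLyap t ht y).trans
    (mul_le_mul_of_nonneg_right (hs ht) ((hN.nonneg y).trans (hNV y)))

theorem IsIntegralSolution.apply_le [CompleteSpace E] {x : E} {ξ : ℝ → E} {k B : ℝ}
    (hf : Continuous f) (hV : Differentiable ℝ V) (hN : IsNorm N) (hNV : ∀ y, N y ≤ V y)
    (h : IsIntegralSolution f n T x ξ) (hk : 0 ≤ k)
    (hLyap : ∀ t ∈ Icc 0 T, ∀ y, fderiv ℝ V y (f (y + n t)) ≤ k * V y)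
    (hB : ∀ t ∈ Icc 0 T, N (n t) ≤ B) {t : ℝ} (ht : t ∈ Icc 0 T) :
    N (ξ t) ≤ V x * Real.exp (k * T) + B := by
  have hVx : 0 ≤ V x := (hN.nonneg x).trans (hNV x)
  calc N (ξ t) = N ((ξ t - n t) + n t) := by rw [sub_add_cancel]
    _ ≤ N (ξ t - n t) + N (n t) := hN.2.2 _ _
    _ ≤ V x * Real.exp (k * t) + B :=
      add_le_add ((hNV _).trans (h.lyapunov_le hf hV hLyap ht)) (hB t ht)
    _ ≤ V x * Real.exp (k * T) + B := by gcongr; exact ht.2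

variable [FiniteDimensional ℝ E]

theorem continuous_apply_of_isIntegralSolution {ξ : E → ℝ → E} (hf : ContDiff ℝ 1 f)
    (hV : Differentiable ℝ V) (hN : IsNorm N) (hNV : ∀ y, N y ≤ V y)
    (hsol : ∀ x, IsIntegralSolution f n T x (ξ x)) (hψ : ContinuousOn ψ (Icc 0 T))
    (hψ0 : ∀ t ∈ Icc 0 T, 0 ≤ ψ t) (hn : ContinuousOn n (Icc 0 T))
    (hLyap : ∀ t ∈ Icc 0 T, ∀ y, fderiv ℝ V y (f (y + n t)) ≤ ψ t * V y)
    {t : ℝ} (ht : t ∈ Icc 0 T) : Continuous fun x => ξ x t := by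
  have := FiniteDimensional.complete ℝ E
  obtain ⟨s₁, hs₁, hψs₁⟩ := isCompact_Icc.exists_isMaxOn ⟨t, ht⟩ hψ
  obtain ⟨s₂, -, hns₂⟩ := isCompact_Icc.exists_isMaxOn ⟨t, ht⟩ (hN.continuous.comp_continuousOn hn)
  refine continuous_iff_continuousAt.2 fun x₀ => ?_
  set R := N x₀ + 1
  obtain ⟨C, hC⟩ := (hN.isCompact_setOf_le R).bddAbove_image hV.continuous.continuousOn
  set R' := C * Real.exp (ψ s₁ * T) + N (n s₂)
  obtain ⟨L, hL⟩ := hf.locallyLipschitz.locallyLipschitzOn.exists_lipschitzOnWith_of_compact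
    (hN.isCompact_setOf_le R')
  have hmaps : ∀ x, N x ≤ R → MapsTo (ξ x) (Icc 0 T) {y | N y ≤ R'} := fun x hx s hs =>
    ((hsol x).apply_le hf.continuous hV hN hNV (hψ0 s₁ hs₁)
      (lyapunov_le_of_isMaxOn hN hNV hLyap hψs₁) (fun _ h => hns₂ h) hs).trans
      (add_le_add_left (mul_le_mul_of_nonneg_right (hC ⟨x, hx, rfl⟩) (Real.exp_pos _).le) _)
  have hLip : LipschitzOnWith (Real.exp (L * t)).toNNReal (fun x => ξ x t) {x | N x ≤ R} :=
    LipschitzOnWith.of_dist_le' fun x hx y hy => by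
      rw [dist_eq_norm, dist_eq_norm, mul_comm]
      exact (hsol x).norm_sub_le hf.continuous (hsol y) hL (hmaps x hx) (hmaps y hy) ht
  exact hLip.continuousOn.continuousAt (mem_of_superset
    ((isOpen_lt hN.continuous continuous_const).mem_nhds (lt_add_one (N x₀)))
    fun _ hy => le_of_lt (a := N _) hy)

theorem IsIntegralSolution.ofReal_rpow_le {x : E} {ξ : ℝ → E} (hf : Continuous f)
    (hV : Differentiable ℝ V) (hN : IsNorm N) (hNV : ∀ y, N y ≤ V y)
    (h : IsIntegralSolution f n T x ξ) (hψ : ContinuousOn ψ (Icc 0 T))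
    (hψ0 : ∀ t ∈ Icc 0 T, 0 ≤ ψ t) (hn : ContinuousOn n (Icc 0 T))
    (hLyap : ∀ t ∈ Icc 0 T, ∀ y, fderiv ℝ V y (f (y + n t)) ≤ ψ t * V y)
    {r t : ℝ} (hr : 0 ≤ r) (ht : t ∈ Icc 0 T) :
    ENNReal.ofReal (N (ξ t) ^ r) ≤ 2 ^ r * (ENNReal.ofReal (V x ^ r) *
      (⨆ s ∈ Icc 0 T, ENNReal.ofReal (Real.exp (r * T * ψ s))) +
      ⨆ s ∈ Icc 0 T, ENNReal.ofReal (N (n s) ^ r)) := by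
  have := FiniteDimensional.complete ℝ E
  obtain ⟨s₁, hs₁, hψs₁⟩ := isCompact_Icc.exists_isMaxOn ⟨t, ht⟩ hψ
  obtain ⟨s₂, hs₂, hns₂⟩ :=
    isCompact_Icc.exists_isMaxOn ⟨t, ht⟩ (hN.continuous.comp_continuousOn hn)
  have hVx : 0 ≤ V x := (hN.nonneg x).trans (hNV x)
  have hbound := h.apply_le hf hV hN hNV (hψ0 s₁ hs₁) (lyapunov_le_of_isMaxOn hN hNV hLyap hψs₁)
    (fun _ h => hns₂ h) ht
  calc ENNReal.ofReal (N (ξ t) ^ r)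
      ≤ ENNReal.ofReal ((V x * Real.exp (ψ s₁ * T) + N (n s₂)) ^ r) :=
        ENNReal.ofReal_le_ofReal (Real.rpow_le_rpow (hN.nonneg _) hbound hr)
    _ ≤ 2 ^ r * (ENNReal.ofReal ((V x * Real.exp (ψ s₁ * T)) ^ r) +
        ENNReal.ofReal (N (n s₂) ^ r)) :=
        ENNReal.ofReal_add_rpow_le (by positivity) (hN.nonneg _) hr
    _ = 2 ^ r * (ENNReal.ofReal (V x ^ r) * ENNReal.ofReal (Real.exp (r * T * ψ s₁)) +
        ENNReal.ofReal (N (n s₂) ^ r)) := by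
        rw [Real.mul_rpow hVx (Real.exp_pos _).le, ← Real.exp_mul,
          ENNReal.ofReal_mul (Real.rpow_nonneg hVx r)]
        ring_nf
    _ ≤ _ := mul_le_mul_right (add_le_add (mul_le_mul_right
        (le_iSup₂ (f := fun s _ => ENNReal.ofReal (Real.exp (r * T * ψ s))) s₁ hs₁) _)
        (le_iSup₂ (f := fun s _ => ENNReal.ofReal (N (n s) ^ r)) s₂ hs₂)) _

theorem IsIntegralSolution.biSup_ofReal_rpow_le {ξ : E → ℝ → E}
    (hf : Continuous f) (hV : Differentiable ℝ V) (hN : IsNorm N) (hNV : ∀ y, N y ≤ V y)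
    (hsol : ∀ x, IsIntegralSolution f n T x (ξ x)) (hψ : ContinuousOn ψ (Icc 0 T))
    (hψ0 : ∀ t ∈ Icc 0 T, 0 ≤ ψ t) (hn : ContinuousOn n (Icc 0 T))
    (hLyap : ∀ t ∈ Icc 0 T, ∀ y, fderiv ℝ V y (f (y + n t)) ≤ ψ t * V y)
    {R C r : ℝ} (hC : ∀ x, N x ≤ R → V x ≤ C) (hr : 0 ≤ r) :
    ⨆ x ∈ {x | N x ≤ R}, ⨆ t ∈ Icc 0 T, ENNReal.ofReal (N (ξ x t) ^ r) ≤
      2 ^ r * (ENNReal.ofReal (C ^ r) * (⨆ t ∈ ratIcc T, ENNReal.ofReal (Real.exp (r * T * ψ t))) +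
        ⨆ t ∈ ratIcc T, ENNReal.ofReal (N (n t) ^ r)) := by
  rw [biSup_ratIcc_eq (g := fun t => ENNReal.ofReal (Real.exp (r * T * ψ t)))
      (ENNReal.continuous_ofReal.comp_continuousOn
        (Real.continuous_exp.comp_continuousOn (continuousOn_const.mul hψ))),
    biSup_ratIcc_eq (g := fun t => ENNReal.ofReal (N (n t) ^ r))
      (ENNReal.continuous_ofReal.comp_continuousOn
        ((Real.continuous_rpow_const hr).comp_continuousOn (hN.continuous.comp_continuousOn hn)))]
  refine iSup₂_le fun x (hx : N x ≤ R) => iSup₂_le fun t ht =>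
    ((hsol x).ofReal_rpow_le hf hV hN hNV hψ hψ0 hn hLyap hr ht).trans ?_
  gcongr
  exacts [(hN.nonneg x).trans (hNV x), hC x hx]

end Lyapunov

section RatBall

variable {d : ℕ} {N : (Fin d → ℝ) → ℝ} {R : ℝ}

theorem ratBall_countable (d : ℕ) (N : (Fin d → ℝ) → ℝ) (R : ℝ) : (ratBall d N R).Countable :=
  (countable_pi fun _ => countable_range ((↑) : ℚ → ℝ)).mono fun _ hx i => hx.1 i

theorem setOf_le_subset_closure_ratBall (hN : IsNorm N) :
    {x | N x ≤ R} ⊆ closure (ratBall d N R) := by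
  intro x (hx : N x ≤ R)
  rcases (hN.nonneg x).eq_or_lt with h0 | hpos
  · obtain rfl : x = 0 := (hN.1 x).1 h0.symm
    exact subset_closure ⟨fun _ => ⟨0, Rat.cast_zero⟩, hx⟩
  have hdense : Dense {y : Fin d → ℝ | ∀ i, ∃ q : ℚ, (q : ℝ) = y i} := by
    simpa [Set.pi, Dense] using dense_pi univ fun _ _ => Rat.denseRange_cast (𝕜 := ℝ)
  have hopen : {y | N y < R} ⊆ closure (ratBall d N R) :=
    (hdense.open_subset_closure_inter (isOpen_lt hN.continuous continuous_const)).trans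
      (closure_mono fun y hy => ⟨hy.2, hy.1.le⟩)
  refine closure_minimal hopen isClosed_closure (mem_closure_of_tendsto (f := fun c : ℝ => c • x)
    (b := 𝓝[<] 1) ?_ ?_)
  · exact ((continuous_id.smul continuous_const).tendsto' (1 : ℝ) x (one_smul ℝ x)).mono_left
      nhdsWithin_le_nhds
  · filter_upwards [Ioo_mem_nhdsLT zero_lt_one] with c hc
    show N (c • x) < R
    rw [hN.2.1, abs_of_pos hc.1]
    nlinarith [hc.2]

theorem biSup_ratBall_ratIcc_eq (hN : IsNorm N) {T : ℝ} {F : (Fin d → ℝ) → ℝ → ℝ≥0∞}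
    (hFt : ∀ x, ContinuousOn (F x) (Icc 0 T)) (hFx : ∀ t ∈ Icc 0 T, Continuous fun x => F x t) :
    ⨆ x ∈ ratBall d N R, ⨆ t ∈ ratIcc T, F x t = ⨆ x ∈ {x | N x ≤ R}, ⨆ t ∈ Icc 0 T, F x t := by
  have hlsc : LowerSemicontinuousOn (fun x => ⨆ t ∈ ratIcc T, F x t) {x | N x ≤ R} :=
    lowerSemicontinuousOn_biSup fun t ht => (hFx t ht.1).lowerSemicontinuous.lowerSemicontinuousOn _
  rw [hlsc.biSup_eq_of_subset_closure (fun _ hx => hx.2) (setOf_le_subset_closure_ratBall hN)]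
  simp only [biSup_ratIcc_eq (hFt _)]

theorem IsIntegralSolution.biSup_ratBall_ratIcc_rpow_eq {f : (Fin d → ℝ) → (Fin d → ℝ)}
    {n : ℝ → Fin d → ℝ} {T : ℝ} {V : (Fin d → ℝ) → ℝ} {ψ : ℝ → ℝ}
    {ξ : (Fin d → ℝ) → ℝ → (Fin d → ℝ)}
    (hf : ContDiff ℝ 1 f) (hV : Differentiable ℝ V) (hN : IsNorm N) (hNV : ∀ y, N y ≤ V y)
    (hsol : ∀ x, IsIntegralSolution f n T x (ξ x)) (hψ : ContinuousOn ψ (Icc 0 T))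
    (hψ0 : ∀ t ∈ Icc 0 T, 0 ≤ ψ t) (hn : ContinuousOn n (Icc 0 T))
    (hLyap : ∀ t ∈ Icc 0 T, ∀ y, fderiv ℝ V y (f (y + n t)) ≤ ψ t * V y) {r : ℝ} (hr : 0 ≤ r) :
    ⨆ x ∈ ratBall d N R, ⨆ t ∈ ratIcc T, ENNReal.ofReal (N (ξ x t) ^ r) =
      ⨆ x ∈ {x | N x ≤ R}, ⨆ t ∈ Icc 0 T, ENNReal.ofReal (N (ξ x t) ^ r) :=
  have hpow : Continuous fun y => ENNReal.ofReal (N y ^ r) :=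
    ENNReal.continuous_ofReal.comp ((Real.continuous_rpow_const hr).comp hN.continuous)
  biSup_ratBall_ratIcc_eq hN (F := fun x t => ENNReal.ofReal (N (ξ x t) ^ r))
    (fun x => hpow.comp_continuousOn (hsol x).1) fun _ ht => hpow.comp
      (continuous_apply_of_isIntegralSolution hf hV hN hNV hsol hψ hψ0 hn hLyap ht)

end RatBall

theorem MeasureTheory.lintegral_lt_top_of_le_mul_add {Ω : Type*} [MeasurableSpace Ω]
    {P : Measure Ω} {F G H : Ω → ℝ≥0∞} {a b : ℝ≥0∞} (ha : a ≠ ⊤) (hb : b ≠ ⊤)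
    (hG : Measurable G) (hF : ∀ ω, F ω ≤ a * (b * G ω + H ω)) (hGi : ∫⁻ ω, G ω ∂P < ⊤)
    (hHi : ∫⁻ ω, H ω ∂P < ⊤) : ∫⁻ ω, F ω ∂P < ⊤ :=
  calc ∫⁻ ω, F ω ∂P ≤ ∫⁻ ω, a * (b * G ω + H ω) ∂P := lintegral_mono hF
    _ = a * (b * ∫⁻ ω, G ω ∂P + ∫⁻ ω, H ω ∂P) := by
      rw [lintegral_const_mul' _ _ ha, lintegral_add_left (hG.const_mul b),
        lintegral_const_mul' _ _ hb]
    _ < ⊤ := ENNReal.mul_lt_top ha.lt_top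
      (ENNReal.add_lt_top.2 ⟨ENNReal.mul_lt_top hb.lt_top hGi, hHi⟩)

theorem sde_solution_integrability
    (d m : ℕ) (T : ℝ) (hT : 0 ≤ T)
    (μ : (Fin d → ℝ) → (Fin d → ℝ)) (hμ : ContDiff ℝ 1 μ)
    (σ : Matrix (Fin d) (Fin m) ℝ)
    (φ : (Fin m → ℝ) → ℝ) (hφc : Continuous φ) (hφ0 : ∀ z, 0 ≤ φ z)
    (V : (Fin d → ℝ) → ℝ) (hV : ContDiff ℝ 1 V)
    (Nd : (Fin d → ℝ) → ℝ) (hNd : IsNorm Nd)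
    (hLyap : ∀ (x : Fin d → ℝ) (z : Fin m → ℝ),
      fderiv ℝ V x (μ (x + σ.mulVec z)) ≤ φ z * V x)
    (hNV : ∀ x, Nd x ≤ V x)
    {Ω : Type*} [MeasurableSpace Ω] (P : Measure Ω)
    (W : ℝ → Ω → (Fin m → ℝ))
    (hWmeas : ∀ t ∈ Set.Icc (0 : ℝ) T, Measurable (W t))
    (hWcont : ∀ ω, ContinuousOn (fun t => W t ω) (Set.Icc (0 : ℝ) T))
    (X : (Fin d → ℝ) → ℝ → Ω → (Fin d → ℝ))
    (hXmeas : ∀ x : Fin d → ℝ, ∀ t ∈ Set.Icc (0 : ℝ) T,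
      Measurable (fun ω => X x t ω))
    (hXcont : ∀ (x : Fin d → ℝ) (ω : Ω),
      ContinuousOn (fun t => X x t ω) (Set.Icc (0 : ℝ) T))
    (hint : ∀ c : ℝ, 0 ≤ c →
      (∫⁻ ω, (⨆ t ∈ ratIcc T, ENNReal.ofReal (Real.exp (c * φ (W t ω)))) ∂P) +
      (∫⁻ ω, (⨆ t ∈ ratIcc T,
        ENNReal.ofReal (Nd (σ.mulVec (W t ω)) ^ c)) ∂P) < ⊤)
    (heq : ∀ x : Fin d → ℝ, ∀ t ∈ Set.Icc (0 : ℝ) T, ∀ ω, X x t ω =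
      x + (∫ s in (0 : ℝ)..t, μ (X x s ω)) + σ.mulVec (W t ω)) :
    (∀ R r : ℝ, 0 ≤ R → 0 ≤ r →
      Measurable (fun ω => ⨆ x ∈ {z : Fin d → ℝ | Nd z ≤ R},
        ⨆ t ∈ Set.Icc (0 : ℝ) T, ENNReal.ofReal (Nd (X x t ω) ^ r))) ∧
    (∀ R r : ℝ, 0 ≤ R → 0 ≤ r →
      (∫⁻ ω, (⨆ x ∈ {z : Fin d → ℝ | Nd z ≤ R},
        ⨆ t ∈ Set.Icc (0 : ℝ) T, ENNReal.ofReal (Nd (X x t ω) ^ r)) ∂P) < ⊤) := by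
  have hsol : ∀ ω x, IsIntegralSolution μ (fun t => σ.mulVec (W t ω)) T x (fun t => X x t ω) :=
    fun ω x => ⟨hXcont x ω, fun t ht => heq x t ht ω⟩
  have hσW : ∀ ω, ContinuousOn (fun t => σ.mulVec (W t ω)) (Icc 0 T) := fun ω =>
    (continuous_const.matrix_mulVec continuous_id).comp_continuousOn (hWcont ω)
  have hφW : ∀ ω, ContinuousOn (fun t => φ (W t ω)) (Icc 0 T) := fun ω =>
    hφc.comp_continuousOn (hWcont ω)
  have hVd : Differentiable ℝ V := hV.differentiable one_ne_zero
  have hLyapW : ∀ ω, ∀ t ∈ Icc 0 T, ∀ y,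
      fderiv ℝ V y (μ (y + σ.mulVec (W t ω))) ≤ φ (W t ω) * V y := fun ω t _ y => hLyap y (W t ω)
  refine ⟨fun R r _ hr => ?_, fun R r _ hr => ?_⟩
  · simp_rw [← fun ω => (IsIntegralSolution.biSup_ratBall_ratIcc_rpow_eq (R := R) hμ hVd hNd hNV
      (hsol ω) (hφW ω) (fun _ _ => hφ0 _) (hσW ω) (hLyapW ω) hr)]
    exact .biSup _ (ratBall_countable d Nd R) fun x _ =>
      .biSup_ratIcc fun t ht => (ENNReal.continuous_ofReal.comp
        ((Real.continuous_rpow_const hr).comp hNd.continuous)).measurable.comp (hXmeas x t ht)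
  · obtain ⟨C, hC⟩ := (hNd.isCompact_setOf_le R).bddAbove_image hV.continuous.continuousOn
    exact lintegral_lt_top_of_le_mul_add (ENNReal.rpow_ne_top_of_nonneg hr ENNReal.ofNat_ne_top)
      ENNReal.ofReal_ne_top
      (.biSup_ratIcc fun t ht => (ENNReal.continuous_ofReal.comp (Real.continuous_exp.comp
        (continuous_const.mul hφc))).measurable.comp (hWmeas t ht))
      (fun ω => IsIntegralSolution.biSup_ofReal_rpow_le hμ.continuous hVd hNd hNV (hsol ω)
        (hφW ω) (fun _ _ => hφ0 _) (hσW ω) (hLyapW ω) (fun x hx => hC ⟨x, hx, rfl⟩) hr)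
      (le_self_add.trans_lt (hint (r * T) (mul_nonneg hr hT))) (le_add_self.trans_lt (hint r hr))
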